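/- Abstract Gödel fixed-point consequence (Löb's theorem form): if Pr satisfies the derivability conditions and T ⊢ Pr(φ) → φ, then T ⊢ φ. As a corollary, if T is consistent then T does not prove ¬Pr(⊥), i.e., T does not prove its own consistency. -/
import Mathlib


/-- Löb's theorem, abstract form: if `Pr` satisfies the Hilbert–Bernays–Löb
derivability conditions and the diagonal lemma is available, then
`T ⊢ Pr(φ) → φ` implies `T ⊢ φ`; and as a corollary, if `T` is consistent
then `T` does not prove its own consistency `¬Pr(⊥)`. -/
theorem stmt_7 {S : Type*} (imp : S → S → S) (neg : S → S) (bot : S)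
    (Prov : S → Prop) (Pr : S → S)
    (neg_def : ∀ φ, neg φ = imp φ bot)
    (mp : ∀ φ ψ, Prov (imp φ ψ) → Prov φ → Prov ψ)
    (taut : ∀ φ ψ χ, Prov (imp (imp φ (imp ψ χ)) (imp (imp φ ψ) (imp φ χ)))
      ∧ Prov (imp φ (imp ψ φ)) ∧ Prov (imp (imp (imp φ bot) bot) φ))
    (D1 : ∀ φ, Prov φ → Prov (Pr φ))
    (D2 : ∀ φ ψ, Prov (imp (Pr (imp φ ψ)) (imp (Pr φ) (Pr ψ))))
    (D3 : ∀ φ, Prov (imp (Pr φ) (Pr (Pr φ))))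
    (diag : ∀ ψ : S → S, ∃ δ, Prov (imp δ (ψ δ)) ∧ Prov (imp (ψ δ) δ)) :
    (∀ φ, Prov (imp (Pr φ) φ) → Prov φ) ∧
      (¬ Prov bot → ¬ Prov (neg (Pr bot))) := by
  -- Hilbert-style helper lemmas
  have dd : ∀ a b c, Prov (imp a (imp b c)) → Prov (imp a b) → Prov (imp a c) := by
    intro a b c h1 h2
    exact mp _ _ (mp _ _ (taut a b c).1 h1) h2
  have comp : ∀ a b c, Prov (imp b c) → Prov (imp a b) → Prov (imp a c) := by
    intro a b c h1 h2
    exact dd a b c (mp _ _ (taut (imp b c) a (imp b c)).2.1 h1) h2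
  have lob : ∀ φ, Prov (imp (Pr φ) φ) → Prov φ := by
    intro φ hφ
    obtain ⟨δ, h1, h2⟩ := diag (fun δ => imp (Pr δ) φ)
    have h3 := D1 _ h1
    have h4 := mp _ _ (D2 δ (imp (Pr δ) φ)) h3
    have h6 := comp _ _ _ (D2 (Pr δ) φ) h4
    have h7 := dd _ _ _ h6 (D3 δ)
    have h8 := comp _ _ _ hφ h7
    have h9 := mp _ _ h2 h8
    exact mp _ _ h8 (D1 _ h9)
  refine ⟨lob, fun hcon hprov => ?_⟩
  rw [neg_def] at hprov
  exact hcon (lob bot hprov)
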